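/- Let (W,S) be a Coxeter system and let s₁, s₂, … be a (possibly infinite) sequence of elements of S. For a finite subsequence S′: s_{i₁}, s_{i₂}, …, s_{i_m} of this sequence, let w(S′) denote the element s_{i_m} s_{i_{m−1}} ⋯ s_{i₁} of W. Let K be a subset of W with a unique minimal element u with respect to the Bruhat order. Define recursively u₀ = u and u_{j+1} = u_j ∧ s_{j+1} u_j for j ≥ 0. Then the sequence (u_j) is eventually constant, and the union ∪_{S′} w(S′)K over all finite subsequences S′ (including the empty one) has a unique minimal element in the Bruhat order, equal to the stable value u_∞ of (u_j). -/

import Mathlib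

/-!
The sequence `u_j` decreases weakly in the Bruhat order, so its lengths and then the sequence
itself stabilize. By induction on `j`, `u_j` is of the form `w(S')u` for a subsequence `S'` of
`s_1, …, s_j`, and lies below `w(S')k` for every such `S'` and every `k ∈ K`. The inductive step is
the lifting property: if `c ≤ a`, `c ≤ s a` and `a ≤ b`, then `c ≤ s b`, because either
`s b > b ≥ a ≥ c`, or `s b < b` and then `a ≤ s b` or `s a ≤ s b`.

Transitivity and the lifting property of the subword order need every reduced word of `v` to
contain a subword for each `u ≤ v`. This follows by comparing with the order generated by
`w < t w` (`t` a reflection, `ℓ w < ℓ (t w)`), and comes down to the strong exchange property.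
For that, `W` acts on `W × ZMod 2` with `s_i` acting by `(t, ε) ↦ (s_i t s_i, ε + [t = s_i])`.
The resulting cocycle counts, modulo `2`, the occurrences of `t` in the left inversion sequence of
any word for `w`; it equals `1` at reflections `t` with `ℓ (t w) < ℓ w`, so such a `t` occurs in the
left inversion sequence of every word for `w`.
-/

variable {B W : Type*} [Group W] {M : CoxeterMatrix B}

/-- The (strong) Bruhat order on the Coxeter group `W`: `u ≤ v` if and only if some
reduced word for `v` admits a sublist whose product is `u`. -/
def BruhatLE (cs : CoxeterSystem M W) (u v : W) : Prop :=
  ∃ ω : List B, cs.IsReduced ω ∧ cs.wordProd ω = v ∧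
    ∃ ω' : List B, ω'.Sublist ω ∧ cs.wordProd ω' = u

/-- The strict Bruhat order. -/
def BruhatLT (cs : CoxeterSystem M W) (u v : W) : Prop :=
  BruhatLE cs u v ∧ u ≠ v

/-- `m` is the unique minimal element of `K` in the Bruhat order, i.e. `m ∈ K` and
`m` is Bruhat-below every element of `K`. -/
def IsBrMin (cs : CoxeterSystem M W) (K : Set W) (m : W) : Prop :=
  m ∈ K ∧ ∀ x ∈ K, BruhatLE cs m x

/-- `m` is the unique maximal element of `K` in the Bruhat order, i.e. `m ∈ K` and
`m` is Bruhat-above every element of `K`. -/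
def IsBrMax (cs : CoxeterSystem M W) (K : Set W) (m : W) : Prop :=
  m ∈ K ∧ ∀ x ∈ K, BruhatLE cs x m

/-- A standard parabolic subgroup: a subgroup generated by a subset of the simple
reflections. -/
def IsStdParabolic (cs : CoxeterSystem M W) (P : Subgroup W) : Prop :=
  ∃ X : Set B, P = Subgroup.closure (cs.simple '' X)

/-- The left coset `u•W₁ = {u * b : b ∈ W₁}`. -/
def lCoset (W₁ : Subgroup W) (u : W) : Set W := {x | ∃ b ∈ W₁, x = u * b}

/-- The double coset `W₁ u W₂ = {a * u * b : a ∈ W₁, b ∈ W₂}`. -/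
def dblCoset (W₁ W₂ : Subgroup W) (u : W) : Set W :=
  {x | ∃ a ∈ W₁, ∃ b ∈ W₂, x = a * u * b}

namespace CoxeterSystem

variable (cs : CoxeterSystem M W)

local prefix:100 "s" => cs.simple
local prefix:100 "π" => cs.wordProd
local prefix:100 "ℓ" => cs.length
local prefix:100 "lis " => cs.leftInvSeq

section Parity

open scoped Classical

noncomputable def parityPerm (i : B) : Equiv.Perm (W × ZMod 2) :=
  Function.Involutive.toPerm (fun p ↦ (s i * p.1 * s i, p.2 + if p.1 = s i then 1 else 0)) <| by
    rintro ⟨t, ε⟩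
    have hconj : s i * t * s i = s i ↔ t = s i := by
      rw [mul_assoc, mul_eq_left, mul_eq_one_iff_eq_inv, inv_simple]
    simp only [Prod.mk.injEq, hconj, add_assoc, CharTwo.add_self_eq_zero, add_zero, and_true]
    simp [mul_assoc]

lemma parityPerm_apply (i : B) (t : W) (ε : ZMod 2) :
    parityPerm cs i (t, ε) = (s i * t * s i, ε + if t = s i then 1 else 0) :=
  rfl

lemma parityPerm_mul_pow_apply (i i' : B) (k : ℕ) (t : W) (ε : ZMod 2) :
    ((parityPerm cs i * parityPerm cs i') ^ k) (t, ε) =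
      ((s i' * s i)⁻¹ ^ k * t * (s i' * s i) ^ k,
        ε + ∑ r ∈ Finset.range (2 * k), if t = (s i' * s i) ^ r * s i' then 1 else 0) := by
  induction k generalizing t ε with
  | zero => simp
  | succ k ih =>
    set p := s i' * s i with hp
    have hconj : s i * (s i' * t * s i') * s i = p⁻¹ * t * p := by simp [hp, mul_assoc]
    have hshift (r : ℕ) : p * (p ^ r * s i') * p⁻¹ = p ^ (r + 2) * s i' := by
      have hsp : s i' * p⁻¹ = p * s i' := by simp [hp, mul_assoc]
      calc p * (p ^ r * s i') * p⁻¹ = p ^ (r + 1) * (s i' * p⁻¹) := by group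
        _ = p ^ (r + 2) * s i' := by rw [hsp]; group
    have hconj_eq (x : W) : p⁻¹ * t * p = x ↔ t = p * x * p⁻¹ := by
      constructor <;> rintro rfl <;> group
    have hconj1 : s i' * t * s i' = s i ↔ t = p ^ 1 * s i' := by
      constructor <;> intro h
      · simp [← h, hp, mul_assoc]
      · simp [h, hp, mul_assoc]
    rw [pow_succ, Equiv.Perm.mul_apply, Equiv.Perm.mul_apply, parityPerm_apply,
      parityPerm_apply, ih, hconj]
    simp only [Prod.mk.injEq, hconj_eq, hshift, hconj1, Nat.mul_succ,
      Finset.sum_range_succ' _ (2 * k + 1), Finset.sum_range_succ' _ (2 * k)]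
    constructor
    · group
    · simp only [pow_zero, one_mul]
      abel

lemma isLiftable_parityPerm : M.IsLiftable (parityPerm cs) := by
  intro i i'
  ext1 ⟨t, ε⟩
  -- `r ↦ (s i' * s i) ^ r` has period `M i i'`, so every term of the sum occurs twice.
  have hperiodic (r : ℕ) : (s i' * s i) ^ (M i i' + r) = (s i' * s i) ^ r := by
    rw [pow_add, simple_mul_simple_pow', one_mul]
  rw [parityPerm_mul_pow_apply, simple_mul_simple_pow', two_mul, Finset.sum_range_add]
  simp [hperiodic, CharTwo.add_self_eq_zero]

noncomputable def parityRep : W →* Equiv.Perm (W × ZMod 2) :=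
  cs.lift ⟨parityPerm cs, isLiftable_parityPerm cs⟩

lemma parityRep_simple (i : B) : parityRep cs (s i) = parityPerm cs i :=
  cs.lift_apply_simple (isLiftable_parityPerm cs) i

lemma count_leftInvSeq_cons (i : B) (ω : List B) (x : W) :
    (lis (i :: ω)).count (s i * x * s i) = (lis ω).count x + if x = s i then 1 else 0 := by
  have hx : s i * x * s i = MulAut.conj (s i) x := by simp
  have hself : s i = s i * x * s i ↔ x = s i := by
    rw [eq_comm, mul_assoc, mul_eq_left, mul_eq_one_iff_eq_inv, inv_simple]
  rw [leftInvSeq, List.count_cons, hx, List.count_map_of_injective _ _ (MulAut.conj _).injective,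
    ← hx]
  simp only [beq_iff_eq, hself]

lemma parityRep_wordProd_apply (ω : List B) (t : W) (ε : ZMod 2) :
    parityRep cs (π ω) (t, ε) =
      (π ω * t * (π ω)⁻¹, ε + ((lis ω).count (π ω * t * (π ω)⁻¹) : ZMod 2)) := by
  induction ω generalizing t ε with
  | nil => simp
  | cons i ω ih =>
    have hconj : s i * π ω * t * (s i * π ω)⁻¹ = s i * (π ω * t * (π ω)⁻¹) * s i := by
      simp [mul_assoc]
    rw [wordProd_cons, map_mul, Equiv.Perm.mul_apply, ih, parityRep_simple, parityPerm_apply,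
      hconj, count_leftInvSeq_cons]
    congr 1
    push_cast
    ring

noncomputable def invParity (w t : W) : ZMod 2 := (parityRep cs w (w⁻¹ * t * w, 0)).2

lemma invParity_wordProd (ω : List B) (t : W) :
    invParity cs (π ω) t = (lis ω).count t := by
  simp [invParity, parityRep_wordProd_apply, mul_assoc]

lemma parityRep_apply (w t : W) (ε : ZMod 2) :
    parityRep cs w (t, ε) = (w * t * w⁻¹, ε + invParity cs w (w * t * w⁻¹)) := by
  obtain ⟨ω, rfl⟩ := cs.wordProd_surjective w
  rw [parityRep_wordProd_apply, invParity_wordProd]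

lemma invParity_mul (a b t : W) :
    invParity cs (a * b) t = invParity cs a t + invParity cs b (a⁻¹ * t * a) := by
  have hb : b * ((a * b)⁻¹ * t * (a * b)) * b⁻¹ = a⁻¹ * t * a := by group
  have ha : a * (a⁻¹ * t * a) * a⁻¹ = t := by group
  rw [invParity, map_mul, Equiv.Perm.mul_apply, parityRep_apply cs b, hb, parityRep_apply cs a, ha,
    zero_add, add_comm]

lemma invParity_self {t : W} (ht : cs.IsReflection t) : invParity cs t t = 1 := by
  obtain ⟨z, i, rfl⟩ := ht
  have hsi : invParity cs (s i) (s i) = 1 := by simpa using invParity_wordProd cs [i] (s i)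
  have hone : invParity cs 1 (z * s i * z⁻¹) = 0 := by simpa using invParity_wordProd cs [] _
  have hz : z⁻¹ * (z * s i * z⁻¹) * z = s i := by group
  have h₁ := invParity_mul cs z (s i * z⁻¹) (z * s i * z⁻¹)
  have h₂ := invParity_mul cs (s i) z⁻¹ (s i)
  have h₃ := invParity_mul cs z z⁻¹ (z * s i * z⁻¹)
  rw [← mul_assoc, hz] at h₁
  rw [inv_simple, simple_mul_simple_self, one_mul, hsi] at h₂
  rw [mul_inv_cancel, hone, hz] at h₃
  linear_combination h₁ + h₂ - h₃

lemma invParity_eq_zero_of_length_lt_length_mul {w t : W} (h : ℓ w < ℓ (t * w)) :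
    invParity cs w t = 0 := by
  obtain ⟨ω, hω, rfl⟩ := cs.exists_isReduced w
  rw [invParity_wordProd, List.count_eq_zero.mpr, Nat.cast_zero]
  exact fun hmem ↦ (cs.isLeftInversion_of_mem_leftInvSeq hω hmem).2.not_gt h

lemma invParity_eq_one_of_length_mul_lt {w t : W} (ht : cs.IsReflection t)
    (h : ℓ (t * w) < ℓ w) : invParity cs w t = 1 := by
  have htw : ℓ (t * w) < ℓ (t * (t * w)) := by rwa [← mul_assoc, ht.mul_self, one_mul]
  have := invParity_mul cs t (t * w) t
  rwa [← mul_assoc, ht.mul_self, one_mul, invParity_self cs ht, ht.inv, ht.mul_self, one_mul,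
    invParity_eq_zero_of_length_lt_length_mul cs htw, add_zero] at this

end Parity

theorem strong_exchange (ω : List B) {t : W} (ht : cs.IsReflection t)
    (h : ℓ (t * π ω) < ℓ (π ω)) : ∃ k < ω.length, π (ω.eraseIdx k) = t * π ω := by
  classical
  have hmem : t ∈ lis ω := by
    have hpar := invParity_eq_one_of_length_mul_lt cs ht h
    rw [invParity_wordProd] at hpar
    by_contra hnot
    simp [List.count_eq_zero.mpr hnot] at hpar
  obtain ⟨k, hk, rfl⟩ := List.getElem_of_mem hmem
  refine ⟨k, by simpa using hk, ?_⟩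
  rw [← getD_leftInvSeq_mul_wordProd, List.getD_eq_getElem]

variable {cs} in
theorem isReduced_cons_iff {i : B} {ω : List B} :
    cs.IsReduced (i :: ω) ↔ cs.IsReduced ω ∧ ℓ (π ω) < ℓ (s i * π ω) := by
  constructor
  · intro h
    have hω : cs.IsReduced ω := by simpa using h.drop 1
    refine ⟨hω, ?_⟩
    have := h.eq
    rw [wordProd_cons, List.length_cons, ← hω.eq] at this
    omega
  · rintro ⟨hω, h⟩
    have := cs.length_simple_mul (π ω) i
    show ℓ (π (i :: ω)) = (i :: ω).length
    rw [wordProd_cons, List.length_cons, ← hω.eq]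
    omega

theorem exists_isReduced_cons_of_isLeftDescent {w : W} {i : B} (h : cs.IsLeftDescent w i) :
    ∃ κ, cs.IsReduced (i :: κ) ∧ π (i :: κ) = w := by
  obtain ⟨κ, hκ, hκw⟩ := cs.exists_isReduced (s i * w)
  refine ⟨κ, isReduced_cons_iff.mpr ⟨hκ, ?_⟩, ?_⟩
  · rwa [← hκw, simple_mul_simple_cancel_left]
  · rw [wordProd_cons, ← hκw, simple_mul_simple_cancel_left]

theorem exists_sublist_isReduced (ω : List B) :
    ∃ σ, σ.Sublist ω ∧ cs.IsReduced σ ∧ π σ = π ω := by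
  induction ω with
  | nil => exact ⟨[], List.Sublist.slnil, by simp [IsReduced], rfl⟩
  | cons i ω ih =>
    obtain ⟨σ, hσω, hσ, hσω'⟩ := ih
    rcases cs.length_simple_mul (π σ) i with hup | hdown
    · exact ⟨i :: σ, hσω.cons_cons i, isReduced_cons_iff.mpr ⟨hσ, by omega⟩,
        by rw [wordProd_cons, wordProd_cons, hσω']⟩
    · obtain ⟨k, hk, hdel⟩ := cs.strong_exchange σ (cs.isReflection_simple i) (by omega)
      refine ⟨σ.eraseIdx k, ((List.eraseIdx_sublist σ k).trans hσω).cons i, ?_, ?_⟩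
      · have hlen := List.length_eraseIdx_add_one hk
        have hle := cs.length_wordProd_le (σ.eraseIdx k)
        unfold IsReduced
        rw [hdel] at hle ⊢
        rw [← hσ.eq] at hlen
        omega
      · rw [hdel, wordProd_cons, hσω']

end CoxeterSystem

def BruhatStep (cs : CoxeterSystem M W) (u v : W) : Prop :=
  ∃ t, cs.IsReflection t ∧ v = t * u ∧ cs.length u < cs.length v

def BruhatChainLE (cs : CoxeterSystem M W) : W → W → Prop :=
  Relation.ReflTransGen (BruhatStep cs)

noncomputable def maxSimpleMul (cs : CoxeterSystem M W) (i : B) (w : W) : W :=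
  if cs.length w < cs.length (cs.simple i * w) then cs.simple i * w else w

section BruhatChain

variable {cs : CoxeterSystem M W}

local prefix:100 "s" => cs.simple
local prefix:100 "π" => cs.wordProd
local prefix:100 "ℓ" => cs.length

open CoxeterSystem

theorem bruhatStep_simple_mul {w : W} {i : B} (h : ℓ w < ℓ (s i * w)) :
    BruhatStep cs w (s i * w) :=
  ⟨s i, cs.isReflection_simple i, rfl, h⟩

theorem bruhatStep_wordProd_eraseIdx {ω : List B} (hω : cs.IsReduced ω) {k : ℕ}
    (hk : k < ω.length) : BruhatStep cs (π (ω.eraseIdx k)) (π ω) := by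
  have hk' : k < (cs.leftInvSeq ω).length := by simpa using hk
  set t := (cs.leftInvSeq ω)[k]
  have ht : cs.IsReflection t := cs.isReflection_of_mem_leftInvSeq ω (List.getElem_mem hk')
  have hdel : t * π ω = π (ω.eraseIdx k) := by
    rw [← getD_leftInvSeq_mul_wordProd, List.getD_eq_getElem _ _ hk']
  refine ⟨t, ht, by rw [← hdel, ← mul_assoc, ht.mul_self, one_mul], ?_⟩
  have hlen := List.length_eraseIdx_add_one hk
  have hle := cs.length_wordProd_le (ω.eraseIdx k)
  rw [hω.eq]
  omega

theorem BruhatStep.simple_mul_bruhatChainLE {u v : W} (h : BruhatStep cs u v) {i : B}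
    (hv : cs.IsLeftDescent v i) : BruhatChainLE cs (s i * u) v := by
  obtain ⟨t, ht, rfl, hlt⟩ := h
  obtain ⟨κ, hκ, hκv⟩ := cs.exists_isReduced_cons_of_isLeftDescent hv
  obtain ⟨hκred, hasc⟩ := isReduced_cons_iff.mp hκ
  have htκ : t * π (i :: κ) = u := by rw [hκv, ← mul_assoc, ht.mul_self, one_mul]
  obtain ⟨k, hk, hdel⟩ := cs.strong_exchange (i :: κ) ht (by rwa [htκ, hκv])
  rw [htκ] at hdel
  rw [← hκv, ← hdel]
  cases k with
  | zero =>
    rw [List.eraseIdx_cons_zero, wordProd_cons]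
    exact .refl
  | succ k =>
    rw [List.eraseIdx_cons_succ, wordProd_cons, wordProd_cons, simple_mul_simple_cancel_left]
    exact .tail (.single (bruhatStep_wordProd_eraseIdx hκred (by simpa using hk)))
      (bruhatStep_simple_mul hasc)

theorem BruhatStep.maxSimpleMul {u v : W} (h : BruhatStep cs u v) (i : B) :
    BruhatChainLE cs (maxSimpleMul cs i u) (maxSimpleMul cs i v) := by
  have hu := cs.length_simple_mul u i
  have hv := cs.length_simple_mul v i
  unfold _root_.maxSimpleMul
  split_ifs with hsu hsv hsv
  · obtain ⟨t, ht, rfl, hlt⟩ := h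
    exact .single ⟨s i * t * s i, by simpa using ht.conj (s i), by simp [mul_assoc], by omega⟩
  · exact h.simple_mul_bruhatChainLE (by unfold IsLeftDescent; omega)
  · exact .tail (.single h) (bruhatStep_simple_mul hsv)
  · exact .single h

theorem maxSimpleMul_of_lt {i : B} {w : W} (h : ℓ w < ℓ (s i * w)) :
    maxSimpleMul cs i w = s i * w :=
  if_pos h

theorem BruhatChainLE.maxSimpleMul {u v : W} (h : BruhatChainLE cs u v) (i : B) :
    BruhatChainLE cs (maxSimpleMul cs i u) (maxSimpleMul cs i v) := by
  induction h with
  | refl => exact .refl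
  | tail _ hstep ih => exact ih.trans (hstep.maxSimpleMul i)

variable (cs) in
theorem bruhatChainLE_simple_mul_maxSimpleMul (i : B) (w : W) :
    BruhatChainLE cs (s i * w) (maxSimpleMul cs i w) := by
  unfold maxSimpleMul
  split_ifs with h
  · exact .refl
  · refine .single ⟨s i, cs.isReflection_simple i, by simp, ?_⟩
    have := cs.length_simple_mul w i
    omega

theorem bruhatChainLE_wordProd_of_sublist {ω σ : List B} (hω : cs.IsReduced ω)
    (hσ : σ.Sublist ω) : BruhatChainLE cs (π σ) (π ω) := by
  induction ω generalizing σ with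
  | nil => rw [List.sublist_nil.mp hσ]; exact .refl
  | cons j μ ih =>
    obtain ⟨hμ, hasc⟩ := isReduced_cons_iff.mp hω
    rw [wordProd_cons]
    rcases List.sublist_cons_iff.mp hσ with hσμ | ⟨σ', rfl, hσ'μ⟩
    · exact (ih hμ hσμ).tail (bruhatStep_simple_mul hasc)
    · have hlift := (ih hμ hσ'μ).maxSimpleMul j
      rw [maxSimpleMul_of_lt hasc] at hlift
      rw [wordProd_cons]
      exact (bruhatChainLE_simple_mul_maxSimpleMul cs j _).trans hlift

theorem BruhatChainLE.exists_sublist {u v : W} (h : BruhatChainLE cs u v) {τ : List B}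
    (hτ : cs.IsReduced τ) (hτv : π τ = v) : ∃ σ, σ.Sublist τ ∧ π σ = u := by
  induction h generalizing τ with
  | refl => exact ⟨τ, .refl τ, hτv⟩
  | @tail b _ _ hstep ih =>
    obtain ⟨t, ht, rfl, hlt⟩ := hstep
    have htτ : t * π τ = b := by rw [hτv, ← mul_assoc, ht.mul_self, one_mul]
    obtain ⟨k, -, hdel⟩ := cs.strong_exchange τ ht (by rwa [htτ, hτv])
    obtain ⟨κ, hκ, hκred, hκdel⟩ := cs.exists_sublist_isReduced (τ.eraseIdx k)
    obtain ⟨σ, hσ, rfl⟩ := ih hκred (by rw [hκdel, hdel, htτ])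
    exact ⟨σ, hσ.trans (hκ.trans (List.eraseIdx_sublist τ k)), rfl⟩

theorem bruhatLE_iff_bruhatChainLE {u v : W} : BruhatLE cs u v ↔ BruhatChainLE cs u v := by
  constructor
  · rintro ⟨ω, hω, rfl, σ, hσ, rfl⟩
    exact bruhatChainLE_wordProd_of_sublist hω hσ
  · intro h
    obtain ⟨τ, hτ, rfl⟩ := cs.exists_isReduced v
    obtain ⟨σ, hσ, rfl⟩ := h.exists_sublist hτ rfl
    exact ⟨τ, hτ, rfl, σ, hσ, rfl⟩

theorem bruhatLE_simple_mul {w : W} {i : B} (h : ℓ w < ℓ (s i * w)) : BruhatLE cs w (s i * w) :=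
  bruhatLE_iff_bruhatChainLE.mpr (.single (bruhatStep_simple_mul h))

end BruhatChain

namespace BruhatLE

variable {cs : CoxeterSystem M W}

local prefix:100 "s" => cs.simple
local prefix:100 "π" => cs.wordProd
local prefix:100 "ℓ" => cs.length

open CoxeterSystem

theorem trans {u v w : W} (huv : BruhatLE cs u v) (hvw : BruhatLE cs v w) : BruhatLE cs u w := by
  rw [bruhatLE_iff_bruhatChainLE] at *
  exact huv.trans hvw

theorem exists_sublist {u v : W} (h : BruhatLE cs u v) {τ : List B} (hτ : cs.IsReduced τ)
    (hτv : π τ = v) : ∃ σ, σ.Sublist τ ∧ π σ = u :=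
  (bruhatLE_iff_bruhatChainLE.mp h).exists_sublist hτ hτv

theorem eq_of_length_le {u v : W} (h : BruhatLE cs u v) (hl : ℓ v ≤ ℓ u) : u = v := by
  obtain ⟨ω, hω, rfl, σ, hσ, rfl⟩ := h
  have : ω.length ≤ σ.length := hω.eq ▸ hl.trans (cs.length_wordProd_le σ)
  rw [hσ.eq_of_length_le this]

theorem le_simple_mul_or_of_isLeftDescent {u v : W} (h : BruhatLE cs u v) {i : B}
    (hv : cs.IsLeftDescent v i) :
    BruhatLE cs u (s i * v) ∨ BruhatLE cs (s i * u) (s i * v) := by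
  obtain ⟨κ, hiκ, rfl⟩ := cs.exists_isReduced_cons_of_isLeftDescent hv
  have hκ := (isReduced_cons_iff.mp hiκ).1
  rw [wordProd_cons, simple_mul_simple_cancel_left]
  obtain ⟨σ, hσ, rfl⟩ := h.exists_sublist hiκ rfl
  rcases List.sublist_cons_iff.mp hσ with hσκ | ⟨σ', rfl, hσ'κ⟩
  · exact .inl ⟨κ, hκ, rfl, σ, hσκ, rfl⟩
  · refine .inr ⟨κ, hκ, rfl, σ', hσ'κ, ?_⟩
    rw [wordProd_cons, simple_mul_simple_cancel_left]

theorem le_simple_mul_of_le_of_le_simple_mul {a b c : W} (hab : BruhatLE cs a b) {i : B}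
    (hca : BruhatLE cs c a) (hcsa : BruhatLE cs c (s i * a)) : BruhatLE cs c (s i * b) := by
  rcases cs.length_simple_mul b i with hup | hdown
  · exact (hca.trans hab).trans (bruhatLE_simple_mul (by omega))
  · have hdesc : cs.IsLeftDescent b i := by unfold IsLeftDescent; omega
    rcases hab.le_simple_mul_or_of_isLeftDescent hdesc with h | h
    · exact hca.trans h
    · exact hcsa.trans h

end BruhatLE

section Sequence

variable {cs : CoxeterSystem M W} {uu : ℕ → W}

open CoxeterSystem

theorem exists_forall_ge_eq_of_bruhatLE_succ (h : ∀ j, BruhatLE cs (uu (j + 1)) (uu j)) :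
    ∃ N, ∀ j, N ≤ j → uu j = uu N := by
  refine ⟨Function.argmin (cs.length ∘ uu), fun j hj ↦ ?_⟩
  induction j, hj using Nat.le_induction with
  | base => rfl
  | succ j _ ih =>
    rw [← ih]
    exact (h j).eq_of_length_le (ih ▸ Function.argmin_le (cs.length ∘ uu) (j + 1))

/- A subsequence of `s_1, …, s_j` is encoded by the list `l` of its indices in decreasing order,
and `(j :: l).IsChain (· > ·)` says that all of them are `< j`; then `π (l.map seq)` is `w(S')`. -/
theorem exists_isChain_eq_wordProd_mul {seq : ℕ → B}
    (hstep : ∀ j, uu (j + 1) = uu j ∨ uu (j + 1) = cs.simple (seq j) * uu j) (j : ℕ) :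
    ∃ l : List ℕ, (j :: l).IsChain (· > ·) ∧ uu j = cs.wordProd (l.map seq) * uu 0 := by
  induction j with
  | zero => exact ⟨[], .singleton _, by simp⟩
  | succ j ih =>
    obtain ⟨l, hl, hjl⟩ := ih
    rcases hstep j with h | h
    · refine ⟨l, ?_, by rw [h, hjl]⟩
      rw [List.isChain_cons] at hl ⊢
      exact ⟨fun y hy ↦ (hl.1 y hy).trans (lt_add_one j), hl.2⟩
    · exact ⟨j :: l, List.isChain_cons_cons.mpr ⟨lt_add_one j, hl⟩,
        by rw [h, hjl, List.map_cons, wordProd_cons, mul_assoc]⟩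

theorem bruhatLE_wordProd_mul_of_isChain {seq : ℕ → B}
    (hle : ∀ j, BruhatLE cs (uu (j + 1)) (uu j))
    (hle_simple : ∀ j, BruhatLE cs (uu (j + 1)) (cs.simple (seq j) * uu j))
    {x : W} (hx : BruhatLE cs (uu 0) x) (j : ℕ) (l : List ℕ) (hl : (j :: l).IsChain (· > ·)) :
    BruhatLE cs (uu j) (cs.wordProd (l.map seq) * x) := by
  induction j generalizing l with
  | zero =>
    cases l with
    | nil => simpa using hx
    | cons m l => exact absurd (List.isChain_cons_cons.mp hl).1 (Nat.not_lt_zero m)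
  | succ j ih =>
    cases l with
    | nil => exact (hle j).trans (ih [] (.singleton j))
    | cons m l =>
      obtain ⟨hm, hml⟩ := List.isChain_cons_cons.mp hl
      rcases Nat.lt_succ_iff_lt_or_eq.mp hm with hmj | rfl
      · exact (hle j).trans (ih (m :: l) (List.isChain_cons_cons.mpr ⟨hmj, hml⟩))
      · rw [List.map_cons, wordProd_cons, mul_assoc]
        exact (ih l hml).le_simple_mul_of_le_of_le_simple_mul (hle m) (hle_simple m)

end Sequence

/-- Corollary on sequences of simple reflections: given a (possibly infinite) sequence
`s₁, s₂, …` of simple reflections (here indexed by `seq : ℕ → B`, so `s_{j+1}` is the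
simple reflection at index `seq j`), a subset `K` with unique Bruhat-minimal element `u`,
and the recursively defined sequence `u₀ = u`, `u_{j+1} = u_j ∧ s_{j+1} u_j`, the sequence
`(u_j)` is eventually constant and its stable value is the unique minimal element of the
union `⋃_{S'} w(S') K` over all finite subsequences `S' : s_{i₁}, …, s_{i_m}` (with
`i₁ < ⋯ < i_m`), where `w(S') = s_{i_m} ⋯ s_{i₁}`. -/
theorem stmt_1 (cs : CoxeterSystem M W) (seq : ℕ → B) (K : Set W) (u : W)
    (hK : IsBrMin cs K u) (uu : ℕ → W) (h0 : uu 0 = u)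
    (hstep : ∀ j : ℕ,
      (uu (j + 1) = uu j ∨ uu (j + 1) = cs.simple (seq j) * uu j) ∧
      BruhatLE cs (uu (j + 1)) (uu j) ∧
      BruhatLE cs (uu (j + 1)) (cs.simple (seq j) * uu j)) :
    ∃ N : ℕ, (∀ j, N ≤ j → uu j = uu N) ∧
      IsBrMin cs
        {x | ∃ idx : List ℕ, idx.Chain' (· < ·) ∧
          ∃ k ∈ K, x = cs.wordProd ((idx.map seq).reverse) * k}
        (uu N) := by
  subst h0
  obtain ⟨N, hN⟩ := exists_forall_ge_eq_of_bruhatLE_succ (fun j ↦ (hstep j).2.1)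
  refine ⟨N, hN, ?_, ?_⟩
  · obtain ⟨l, hl, hNl⟩ := exists_isChain_eq_wordProd_mul (fun j ↦ (hstep j).1) N
    refine ⟨l.reverse, List.isChain_reverse.mpr hl.tail, uu 0, hK.1, ?_⟩
    rwa [List.map_reverse, List.reverse_reverse]
  · rintro _ ⟨idx, hidx, k, hk, rfl⟩
    have hbound : ((N + idx.sum + 1) :: idx.reverse).IsChain (· > ·) := by
      refine List.isChain_cons.mpr ⟨fun y hy ↦ ?_, List.isChain_reverse.mpr hidx⟩
      have := List.le_sum_of_mem (List.mem_reverse.mp (List.mem_of_mem_head? hy))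
      omega
    rw [← hN _ (by omega : N ≤ N + idx.sum + 1), ← List.map_reverse]
    exact bruhatLE_wordProd_mul_of_isChain (fun j ↦ (hstep j).2.1) (fun j ↦ (hstep j).2.2)
      (hK.2 k hk) _ _ hbound
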